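/- (Lower bound of the prefix–suffix decomposition lemma.) For every m with 0 ≤ m ≤ k, if Z is nonempty then |Z| ≥ |L| + |R| − 1. -/

import Mathlib

/-
Pad every alive prefix `l ∈ L` with a column-wise maximal suffix, and every alive suffix
`r ∈ R` with a column-wise maximal prefix. The padded words have the scores that define `L`
and `R`, so both paddings inject into `Z`, and their images can only share the word that is
column-wise maximal everywhere. Inclusion–exclusion gives `|L| + |R| ≤ |Z| + 1`.
-/

open Finset

noncomputable def colMax {A : Type*} [Fintype A] [Nonempty A] (W : ℕ → A → ℝ) (h : ℕ) : ℝ :=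
  Finset.univ.sup' Finset.univ_nonempty (W h)

noncomputable def score {A : Type*} (k : ℕ) (W : ℕ → A → ℝ) (w : Fin k → A) : ℝ :=
  ∏ j : Fin k, W j (w j)

theorem Set.ncard_add_ncard_le_ncard_add_one {α β γ : Type*} {L : Set α} {R : Set β}
    {Z : Set γ} {f : α → γ} {g : β → γ} (hZ : Z.Finite) (hf : Set.InjOn f L)
    (hg : Set.InjOn g R) (hfL : f '' L ⊆ Z) (hgR : g '' R ⊆ Z)
    (hfg : (f '' L ∩ g '' R).Subsingleton) :
    L.ncard + R.ncard ≤ Z.ncard + 1 :=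
  calc L.ncard + R.ncard = (f '' L).ncard + (g '' R).ncard := by
        rw [hf.ncard_image, hg.ncard_image]
    _ = (f '' L ∪ g '' R).ncard + (f '' L ∩ g '' R).ncard :=
        (Set.ncard_union_add_ncard_inter _ _ (hZ.subset hfL) (hZ.subset hgR)).symm
    _ ≤ Z.ncard + 1 :=
        add_le_add (Set.ncard_le_ncard (Set.union_subset hfL hgR) hZ)
          ((Set.ncard_le_one (hZ.subset (Set.inter_subset_left.trans hfL))).mpr hfg)

theorem Fin.append_eq_append_iff {α : Type*} {m n : ℕ} {l p : Fin m → α} {s r : Fin n → α} :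
    Fin.append l s = Fin.append p r ↔ l = p ∧ s = r := by
  refine ⟨fun h => ⟨funext fun i => ?_, funext fun i => ?_⟩, fun ⟨hl, hs⟩ => hl ▸ hs ▸ rfl⟩
  · simpa using congrFun h (Fin.castAdd n i)
  · simpa using congrFun h (Fin.natAdd m i)

theorem Fin.range_append_left_inter_range_append_right {α : Type*} {m n : ℕ}
    (p : Fin m → α) (s : Fin n → α) :
    Set.range (fun l => Fin.append l s) ∩ Set.range (Fin.append p) = {Fin.append p s} := by
  ext w
  constructor
  · rintro ⟨⟨l, rfl⟩, ⟨r, hr⟩⟩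
    obtain ⟨rfl, -⟩ := Fin.append_eq_append_iff.mp hr
    rfl
  · rintro rfl
    exact ⟨⟨p, rfl⟩, ⟨s, rfl⟩⟩

section Window

variable {A : Type*}

theorem score_append (W : ℕ → A → ℝ) {m n : ℕ} (l : Fin m → A) (r : Fin n → A) :
    score (m + n) W (Fin.append l r) =
      (∏ j : Fin m, W j (l j)) * ∏ j : Fin n, W (m + j) (r j) := by
  simp [score, Fin.prod_univ_add]

variable [Fintype A] [Nonempty A]

noncomputable def colArgmax (W : ℕ → A → ℝ) (h : ℕ) : A :=
  (Finset.univ.exists_mem_eq_sup' Finset.univ_nonempty (W h)).choose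

theorem apply_colArgmax (W : ℕ → A → ℝ) (h : ℕ) : W h (colArgmax W h) = colMax W h :=
  (Finset.univ.exists_mem_eq_sup' Finset.univ_nonempty (W h)).choose_spec.2.symm

theorem prod_range_colMax (W : ℕ → A → ℝ) (m : ℕ) :
    ∏ h ∈ range m, colMax W h = ∏ j : Fin m, W j (colArgmax W j) := by
  simp only [apply_colArgmax, Fin.prod_univ_eq_prod_range (colMax W)]

theorem prod_Ico_colMax (W : ℕ → A → ℝ) (m n : ℕ) :
    ∏ h ∈ Ico m (m + n), colMax W h = ∏ j : Fin n, W (m + j) (colArgmax W (m + j)) := by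
  simp only [apply_colArgmax, prod_Ico_eq_prod_range, Nat.add_sub_cancel_left,
    Fin.prod_univ_eq_prod_range (fun i => colMax W (m + i))]

end Window

theorem L_add_R_le_Z_add_one_general
    {A : Type*} [Fintype A] [Nonempty A]
    (k : ℕ) (W : ℕ → A → ℝ)
    (ε : ℝ) (m : ℕ) (hm : m ≤ k) :
    Set.ncard {l : Fin m → A |
        (∏ j : Fin m, W j (l j)) * (∏ h ∈ Finset.Ico m k, colMax W h) > ε} +
      Set.ncard {r : Fin (k - m) → A |
        (∏ h ∈ Finset.range m, colMax W h) * (∏ j : Fin (k - m), W (m + j) (r j)) > ε} ≤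
      Set.ncard {w : Fin k → A | score k W w > ε} + 1 := by
  obtain ⟨n, rfl⟩ := Nat.exists_eq_add_of_le hm
  rw [Nat.add_sub_cancel_left, prod_Ico_colMax, prod_range_colMax]
  set topPrefix : Fin m → A := fun j => colArgmax W j
  set topSuffix : Fin n → A := fun j => colArgmax W (m + j)
  refine Set.ncard_add_ncard_le_ncard_add_one (f := fun l => Fin.append l topSuffix)
    (g := Fin.append topPrefix) (Set.toFinite _)
    (fun l _ l' _ h => (Fin.append_eq_append_iff.mp h).1)
    (fun r _ r' _ h => (Fin.append_eq_append_iff.mp h).2) ?_ ?_ ?_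
  · rintro _ ⟨l, hl, rfl⟩
    simpa only [Set.mem_ofPred_eq, score_append] using hl
  · rintro _ ⟨r, hr, rfl⟩
    simpa only [Set.mem_ofPred_eq, score_append] using hr
  · refine (Set.subsingleton_singleton (a := Fin.append topPrefix topSuffix)).anti ?_
    rw [← Fin.range_append_left_inter_range_append_right]
    exact Set.inter_subset_inter (Set.image_subset_range _ _) (Set.image_subset_range _ _)

/-- Lower bound of the prefix–suffix decomposition lemma: if `Z` is nonempty then
`|Z| ≥ |L| + |R| − 1` (stated as `|L| + |R| ≤ |Z| + 1`). -/
theorem L_add_R_le_Z_add_one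
    {A : Type*} [Fintype A] [Nonempty A]
    (k : ℕ) (hk : 1 ≤ k) (W : ℕ → A → ℝ) (hW : ∀ j a, 0 ≤ W j a)
    (ε : ℝ) (hε : 0 ≤ ε) (m : ℕ) (hm : m ≤ k)
    (hZ : {w : Fin k → A | score k W w > ε}.Nonempty) :
    Set.ncard {l : Fin m → A |
        (∏ j : Fin m, W j (l j)) * (∏ h ∈ Finset.Ico m k, colMax W h) > ε} +
      Set.ncard {r : Fin (k - m) → A |
        (∏ h ∈ Finset.range m, colMax W h) * (∏ j : Fin (k - m), W (m + j) (r j)) > ε} ≤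
      Set.ncard {w : Fin k → A | score k W w > ε} + 1 :=
  L_add_R_le_Z_add_one_general k W ε m hm
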